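/- Let n ≥ 1, N ≥ 1, let G₁, G₂ : ℝⁿ → ℝ be continuously differentiable and even, and let w ∈ ℝᴺ. Let Q_i, P_i : ℝ → ℝⁿ (i = 1,…,N) be differentiable curves satisfying for all t the singular-solution dynamics Q̇_i(t) = ∑_{j=1}^N G₁(Q_i(t) − Q_j(t)) P_j(t) and Ṗ_i(t) = −∑_{j=1}^N ⟨P_i(t), P_j(t)⟩ ∇G₁(Q_i(t) − Q_j(t)) − ∑_{j=1}^N w_i w_j ∇G₂(Q_i(t) − Q_j(t)). Then the Hamiltonian H(Q(t), P(t)) = (1/2)∑_{i,j} ⟨P_i(t), P_j(t)⟩ G₁(Q_i(t) − Q_j(t)) + (1/2)∑_{i,j} w_i w_j G₂(Q_i(t) − Q_j(t)) is constant in t. -/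

import Mathlib

/-!
Differentiate `H` along the flow. The weights `G₁(Qᵢ - Qⱼ)`, `⟨Pᵢ, Pⱼ⟩` and `wᵢwⱼ` are symmetric
in `(i, j)`, while `∇Gₖ(Qᵢ - Qⱼ)` is antisymmetric because `Gₖ` is even. Symmetrising the double
sums therefore turns `dH/dt` into
`∑ᵢ ⟨Ṗᵢ, Q̇ᵢ⟩ + ∑ᵢⱼ (⟨Pᵢ, Pⱼ⟩ ⟨∇G₁(Qᵢ - Qⱼ), Q̇ᵢ⟩ + wᵢwⱼ ⟨∇G₂(Qᵢ - Qⱼ), Q̇ᵢ⟩)`,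
which vanishes by the equation for `Ṗᵢ`.
-/

noncomputable def Ham (n N : ℕ) (G₁ G₂ : EuclideanSpace ℝ (Fin n) → ℝ) (w : Fin N → ℝ)
    (Q P : Fin N → EuclideanSpace ℝ (Fin n)) : ℝ :=
  (1 / 2) * ∑ i, ∑ j, (inner ℝ (P i) (P j) : ℝ) * G₁ (Q i - Q j)
    + (1 / 2) * ∑ i, ∑ j, w i * w j * G₂ (Q i - Q j)

open Finset RealInnerProductSpace Gradient

section

variable {E : Type*} [NormedAddCommGroup E] [InnerProductSpace ℝ E] [CompleteSpace E]

theorem Function.Even.gradient_neg {G : E → ℝ} (hG : Function.Even G) (x : E) :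
    ∇ G (-x) = -∇ G x := by
  have chain : ∀ y, DifferentiableAt ℝ G (-y) → HasFDerivAt G (-fderiv ℝ G (-y)) y := by
    intro y hy
    have h := hy.hasFDerivAt.comp y (hasFDerivAt_id y).neg
    rwa [show G ∘ Neg.neg = G from funext hG, ContinuousLinearMap.comp_neg,
      ContinuousLinearMap.comp_id] at h
  suffices fderiv ℝ G (-x) = -fderiv ℝ G x by simp only [gradient, this, map_neg]
  by_cases hdiff : DifferentiableAt ℝ G (-x)
  · rw [(chain x hdiff).fderiv, neg_neg]
  · have hdiff' : ¬DifferentiableAt ℝ G x := fun h ↦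
      hdiff (chain (-x) (by rwa [neg_neg])).differentiableAt
    rw [fderiv_zero_of_not_differentiableAt hdiff, fderiv_zero_of_not_differentiableAt hdiff',
      neg_zero]

theorem DifferentiableAt.hasDerivAt_comp_inner_gradient {G : E → ℝ} {q : ℝ → E} {q' : E} {t : ℝ}
    (hG : DifferentiableAt ℝ G (q t)) (hq : HasDerivAt q q' t) :
    HasDerivAt (fun s ↦ G (q s)) ⟪∇ G (q t), q'⟫ t := by
  rw [inner_gradient_left]
  exact hG.hasFDerivAt.comp_hasDerivAt t hq

end

section

variable {E : Type*} [NormedAddCommGroup E] [InnerProductSpace ℝ E] {ι : Type*} [Fintype ι]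

theorem sum_sum_mul_inner_sub_of_symm_of_antisymm {c : ι → ι → ℝ} {v : ι → ι → E}
    (hc : ∀ i j, c j i = c i j) (hv : ∀ i j, v j i = -v i j) (u : ι → E) :
    ∑ i, ∑ j, c i j * ⟪v i j, u i - u j⟫ = 2 * ∑ i, ∑ j, c i j * ⟪v i j, u i⟫ := by
  have swap : ∑ i, ∑ j, c i j * ⟪v i j, u j⟫ = -∑ i, ∑ j, c i j * ⟪v i j, u i⟫ := by
    rw [sum_comm, ← sum_neg_distrib]
    refine sum_congr rfl fun i _ ↦ ?_
    rw [← sum_neg_distrib]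
    refine sum_congr rfl fun j _ ↦ ?_
    rw [hc, hv, inner_neg_left, mul_neg]
  simp only [inner_sub_right, mul_sub, sum_sub_distrib, swap]
  ring

theorem sum_sum_inner_add_inner_mul_of_symm {g : ι → ι → ℝ} (hg : ∀ i j, g j i = g i j)
    (a b : ι → E) :
    ∑ i, ∑ j, (⟪a i, b j⟫ + ⟪b i, a j⟫) * g i j = 2 * ∑ i, ∑ j, ⟪b i, a j⟫ * g i j := by
  have swap : ∑ i, ∑ j, ⟪a i, b j⟫ * g i j = ∑ i, ∑ j, ⟪b i, a j⟫ * g i j := by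
    rw [sum_comm]
    refine sum_congr rfl fun i _ ↦ sum_congr rfl fun j _ ↦ ?_
    rw [hg, real_inner_comm]
  simp only [add_mul, sum_add_distrib, swap]
  ring

-- `u` and `b` are the velocities `Q̇` and `Ṗ` prescribed by the equations of motion.
theorem pairwise_hamiltonian_derivative_eq_zero {g k : ι → ι → ℝ} {v₁ v₂ : ι → ι → E}
    (hg : ∀ i j, g j i = g i j) (hk : ∀ i j, k j i = k i j)
    (hv₁ : ∀ i j, v₁ j i = -v₁ i j) (hv₂ : ∀ i j, v₂ j i = -v₂ i j) (p : ι → E) :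
    let u i := ∑ j, g i j • p j
    let b i := -(∑ j, ⟪p i, p j⟫ • v₁ i j) - ∑ j, k i j • v₂ i j
    (1 / 2) * ∑ i, ∑ j, ((⟪p i, b j⟫ + ⟪b i, p j⟫) * g i j + ⟪p i, p j⟫ * ⟪v₁ i j, u i - u j⟫)
      + (1 / 2) * ∑ i, ∑ j, k i j * ⟪v₂ i j, u i - u j⟫ = 0 := by
  intro u b
  have hpp : ∀ i j, ⟪p j, p i⟫ = ⟪p i, p j⟫ := fun i j ↦ real_inner_comm _ _
  have hbp : ∀ i, ∑ j, ⟪b i, p j⟫ * g i j = ⟪b i, u i⟫ := by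
    simp only [u, inner_sum, real_inner_smul_right, mul_comm, implies_true]
  have hbu : ∀ i, ⟪b i, u i⟫
      = -∑ j, ⟪p i, p j⟫ * ⟪v₁ i j, u i⟫ - ∑ j, k i j * ⟪v₂ i j, u i⟫ := by
    simp only [b, inner_sub_left, inner_neg_left, sum_inner, real_inner_smul_left, implies_true]
  simp only [sum_add_distrib]
  rw [sum_sum_inner_add_inner_mul_of_symm hg,
    sum_sum_mul_inner_sub_of_symm_of_antisymm hpp hv₁,
    sum_sum_mul_inner_sub_of_symm_of_antisymm hk hv₂]
  simp only [hbp, hbu, sum_sub_distrib, sum_neg_distrib]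
  ring

end

section

variable {E : Type*} [NormedAddCommGroup E] [InnerProductSpace ℝ E] [CompleteSpace E]
  {ι : Type*} [Fintype ι] {G : E → ℝ} {Q P : ι → ℝ → E} {u b : ι → E} {t : ℝ}

theorem hasDerivAt_sum_sum_inner_mul_comp_sub (hG : Differentiable ℝ G)
    (hQ : ∀ i, HasDerivAt (Q i) (u i) t) (hP : ∀ i, HasDerivAt (P i) (b i) t) :
    HasDerivAt (fun s ↦ ∑ i, ∑ j, ⟪P i s, P j s⟫ * G (Q i s - Q j s))
      (∑ i, ∑ j, ((⟪P i t, b j⟫ + ⟪b i, P j t⟫) * G (Q i t - Q j t)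
        + ⟪P i t, P j t⟫ * ⟪∇ G (Q i t - Q j t), u i - u j⟫)) t :=
  HasDerivAt.fun_sum fun i _ ↦ HasDerivAt.fun_sum fun j _ ↦
    ((hP i).inner ℝ (hP j)).mul ((hG _).hasDerivAt_comp_inner_gradient ((hQ i).sub (hQ j)))

theorem hasDerivAt_sum_sum_mul_comp_sub (k : ι → ι → ℝ) (hG : Differentiable ℝ G)
    (hQ : ∀ i, HasDerivAt (Q i) (u i) t) :
    HasDerivAt (fun s ↦ ∑ i, ∑ j, k i j * G (Q i s - Q j s))
      (∑ i, ∑ j, k i j * ⟪∇ G (Q i t - Q j t), u i - u j⟫) t :=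
  HasDerivAt.fun_sum fun i _ ↦ HasDerivAt.fun_sum fun j _ ↦
    ((hG _).hasDerivAt_comp_inner_gradient ((hQ i).sub (hQ j))).const_mul (k i j)

end

theorem stmt16_general (n N : ℕ)
    (G₁ G₂ : EuclideanSpace ℝ (Fin n) → ℝ)
    (hG₁ : ContDiff ℝ 1 G₁) (hG₂ : ContDiff ℝ 1 G₂)
    (hG₁e : ∀ x, G₁ (-x) = G₁ x) (hG₂e : ∀ x, G₂ (-x) = G₂ x)
    (w : Fin N → ℝ)
    (Q P : Fin N → ℝ → EuclideanSpace ℝ (Fin n))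
    (hQ : ∀ (i : Fin N) (t : ℝ),
      HasDerivAt (Q i) (∑ j, G₁ (Q i t - Q j t) • P j t) t)
    (hP : ∀ (i : Fin N) (t : ℝ),
      HasDerivAt (P i)
        (-(∑ j, (inner ℝ (P i t) (P j t) : ℝ) • gradient G₁ (Q i t - Q j t))
          - ∑ j, (w i * w j) • gradient G₂ (Q i t - Q j t)) t) :
    ∀ t₁ t₂ : ℝ,
      Ham n N G₁ G₂ w (fun i => Q i t₁) (fun i => P i t₁) =
        Ham n N G₁ G₂ w (fun i => Q i t₂) (fun i => P i t₂) := by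
  have hG₁d := hG₁.differentiable one_ne_zero
  have hG₂d := hG₂.differentiable one_ne_zero
  have hconst : ∀ t, HasDerivAt (fun s ↦ Ham n N G₁ G₂ w (Q · s) (P · s)) 0 t := by
    intro t
    have hderiv := ((hasDerivAt_sum_sum_inner_mul_comp_sub hG₁d (hQ · t) (hP · t)).const_mul
      (1 / 2 : ℝ)).add ((hasDerivAt_sum_sum_mul_comp_sub (fun i j ↦ w i * w j) hG₂d
        (hQ · t)).const_mul (1 / 2 : ℝ))
    have hG₁_symm : ∀ i j, G₁ (Q j t - Q i t) = G₁ (Q i t - Q j t) := fun i j ↦ by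
      rw [← neg_sub, hG₁e]
    have hG₁_antisymm : ∀ i j, ∇ G₁ (Q j t - Q i t) = -∇ G₁ (Q i t - Q j t) := fun i j ↦ by
      rw [← neg_sub, Function.Even.gradient_neg hG₁e]
    have hG₂_antisymm : ∀ i j, ∇ G₂ (Q j t - Q i t) = -∇ G₂ (Q i t - Q j t) := fun i j ↦ by
      rw [← neg_sub, Function.Even.gradient_neg hG₂e]
    rwa [pairwise_hamiltonian_derivative_eq_zero hG₁_symm (fun i j ↦ mul_comm (w j) (w i))
      hG₁_antisymm hG₂_antisymm (P · t)] at hderiv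
  exact is_const_of_deriv_eq_zero (fun s ↦ (hconst s).differentiableAt) (fun s ↦ (hconst s).deriv)

/-- Along the singular-solution dynamics
`Q̇ᵢ = ∑ⱼ G₁(Qᵢ-Qⱼ)Pⱼ`, `Ṗᵢ = -∑ⱼ ⟨Pᵢ,Pⱼ⟩∇G₁(Qᵢ-Qⱼ) - ∑ⱼ wᵢwⱼ∇G₂(Qᵢ-Qⱼ)`,
the Hamiltonian `H(Q(t),P(t))` is constant in time. -/
theorem stmt16 (n N : ℕ) (hn : 1 ≤ n) (hN : 1 ≤ N)
    (G₁ G₂ : EuclideanSpace ℝ (Fin n) → ℝ)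
    (hG₁ : ContDiff ℝ 1 G₁) (hG₂ : ContDiff ℝ 1 G₂)
    (hG₁e : ∀ x, G₁ (-x) = G₁ x) (hG₂e : ∀ x, G₂ (-x) = G₂ x)
    (w : Fin N → ℝ)
    (Q P : Fin N → ℝ → EuclideanSpace ℝ (Fin n))
    (hQ : ∀ (i : Fin N) (t : ℝ),
      HasDerivAt (Q i) (∑ j, G₁ (Q i t - Q j t) • P j t) t)
    (hP : ∀ (i : Fin N) (t : ℝ),
      HasDerivAt (P i)
        (-(∑ j, (inner ℝ (P i t) (P j t) : ℝ) • gradient G₁ (Q i t - Q j t))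
          - ∑ j, (w i * w j) • gradient G₂ (Q i t - Q j t)) t) :
    ∀ t₁ t₂ : ℝ,
      Ham n N G₁ G₂ w (fun i => Q i t₁) (fun i => P i t₁) =
        Ham n N G₁ G₂ w (fun i => Q i t₂) (fun i => P i t₂) :=
  stmt16_general n N G₁ G₂ hG₁ hG₂ hG₁e hG₂e w Q P hQ hP
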